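/- Let μ be a fuzzy measure, A ∈ Σ, f a nonnegative measurable function, and define the distribution function F(α) = μ(A ∩ {x : f x ≥ α}). If F(α₀) = α₀ for some α₀ ≥ 0, then the Sugeno integral of f over A equals α₀. -/

import Mathlib

open MeasureTheory Set ENNReal Filter

/-- Sugeno integral of `f` over `A` w.r.t. a set function `μ`. -/
noncomputable def sugeno {X : Type*} (μ : Set X → ℝ≥0∞) (A : Set X) (f : X → ℝ) : ℝ≥0∞ :=
  ⨆ α : NNReal, ((α : ℝ≥0∞) ⊓ μ (A ∩ {x | (α : ℝ) ≤ f x}))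

section

variable {X : Type*} {μ : Set X → ℝ≥0∞} {A : Set X} {f : X → ℝ} {α₀ : NNReal}

lemma le_sugeno (h : (α₀ : ℝ≥0∞) ≤ μ (A ∩ {x | (α₀ : ℝ) ≤ f x})) :
    (α₀ : ℝ≥0∞) ≤ sugeno μ A f :=
  le_iSup_of_le α₀ (le_inf le_rfl h)

/-- Below `α₀` the term `α` bounds the integrand; above `α₀` the level set shrinks, so
monotonicity bounds it by `μ` of the level set at `α₀`. -/
lemma sugeno_le (hμ : Monotone μ) (h : μ (A ∩ {x | (α₀ : ℝ) ≤ f x}) ≤ α₀) :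
    sugeno μ A f ≤ α₀ := by
  refine iSup_le fun α => ?_
  rcases le_total α α₀ with hα | hα
  · exact inf_le_left.trans (by exact_mod_cast hα)
  · have hlevel : A ∩ {x | (α : ℝ) ≤ f x} ⊆ A ∩ {x | (α₀ : ℝ) ≤ f x} :=
      inter_subset_inter_right A fun x (hx : (α : ℝ) ≤ f x) => (NNReal.coe_le_coe.mpr hα).trans hx
    exact inf_le_right.trans ((hμ hlevel).trans h)

end

theorem sugeno_of_fixed_point_general {X : Type*} (μ : Set X → ℝ≥0∞)
    (hmono : ∀ s t : Set X, s ⊆ t → μ s ≤ μ t)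
    (A : Set X)
    (f : X → ℝ) (α₀ : NNReal)
    (hfix : μ (A ∩ {x | (α₀ : ℝ) ≤ f x}) = (α₀ : ℝ≥0∞)) :
    sugeno μ A f = (α₀ : ℝ≥0∞) :=
  le_antisymm (sugeno_le (fun s t => hmono s t) hfix.le) (le_sugeno hfix.ge)

theorem sugeno_of_fixed_point {X : Type*} [MeasurableSpace X] (μ : Set X → ℝ≥0∞)
    (hμ0 : μ ∅ = 0) (hmono : ∀ s t : Set X, s ⊆ t → μ s ≤ μ t)
    (A : Set X) (hA : MeasurableSet A)
    (f : X → ℝ) (hf : Measurable f) (hf0 : ∀ x, 0 ≤ f x) (α₀ : NNReal)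
    (hfix : μ (A ∩ {x | (α₀ : ℝ) ≤ f x}) = (α₀ : ℝ≥0∞)) :
    sugeno μ A f = (α₀ : ℝ≥0∞) :=
  sugeno_of_fixed_point_general μ hmono A f α₀ hfix
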